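/- Let θ = -L(Lᵗ)⁻¹ be the Coxeter transformation of the Tamari poset of degree n, acting on the free vector space on trees of degree n (and similarly in each degree). Then for all trees T¹, T² with |T¹| + |T²| = n, θ(T¹\T²) = -θ(T¹) * θ(T²), where * is the dendriform associative product. -/

import Mathlib

/-- Planar binary trees (full binary trees). -/
inductive PBT : Type
  | leaf : PBT
  | node : PBT → PBT → PBT
  deriving DecidableEq

namespace PBT

/-- Degree: number of internal (trivalent) vertices. -/
def deg : PBT → ℕ
  | leaf => 0
  | node l r => deg l + deg r + 1

/-- `graftL S T = S/T`: graft the root of `S` onto the leftmost leaf of `T`. -/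
def graftL (S : PBT) : PBT → PBT
  | leaf => S
  | node l r => node (graftL S l) r

/-- `graftR S T = S\T`: graft the root of `T` onto the rightmost leaf of `S`. -/
def graftR : PBT → PBT → PBT
  | leaf, T => T
  | node l r, T => node l (graftR r T)

/-- The unique tree with one internal vertex. -/
def Y : PBT := node leaf leaf

/-- One right rotation somewhere in the tree: the Tamari covering relation. -/
inductive rot : PBT → PBT → Prop
  | rotate (A B C : PBT) : rot (node (node A B) C) (node A (node B C))
  | left {S S' : PBT} (T : PBT) : rot S S' → rot (node S T) (node S' T)
  | right (S : PBT) {T T' : PBT} : rot T T' → rot (node S T) (node S T')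

/-- The Tamari order: reflexive transitive closure of right rotations. -/
def tamari : PBT → PBT → Prop := Relation.ReflTransGen rot

/-- Left-right reversal. -/
def rev : PBT → PBT
  | leaf => leaf
  | node l r => node (rev r) (rev l)

/-- The left comb of degree `n`. -/
def leftComb : ℕ → PBT
  | 0 => leaf
  | n + 1 => node (leftComb n) leaf

/-- The right comb of degree `n`. -/
def rightComb : ℕ → PBT
  | 0 => leaf
  | n + 1 => node leaf (rightComb n)

end PBT

/-- Trees of degree `n`. -/
abbrev PBTdeg (n : ℕ) := {T : PBT // T.deg = n}

open Classical in
/-- Incidence matrix of the Tamari order in degree `n`. -/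
noncomputable def Lmat (n : ℕ) [Fintype (PBTdeg n)] : Matrix (PBTdeg n) (PBTdeg n) ℚ :=
  Matrix.of fun v w => if PBT.tamari v.1 w.1 then 1 else 0

/-- Coxeter transformation `θ = -L (Lᵗ)⁻¹` of the Tamari poset of degree `n`. -/
noncomputable def thetaMat (n : ℕ) [Fintype (PBTdeg n)] : Matrix (PBTdeg n) (PBTdeg n) ℚ :=
  -(Lmat n * ((Lmat n).transpose)⁻¹)

/-- Basis vector of a tree `T` in the free vector space on trees of degree `n`. -/
def delta (n : ℕ) (T : PBT) : PBTdeg n → ℚ := fun U => if U.1 = T then 1 else 0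

open Classical in
/-- Bilinear extension of the dendriform product `S * T = ∑_{S/T ≤ U ≤ S\T} U`. -/
noncomputable def dprod {n₁ n₂ : ℕ} [Fintype (PBTdeg n₁)] [Fintype (PBTdeg n₂)]
    (f : PBTdeg n₁ → ℚ) (g : PBTdeg n₂ → ℚ) : PBTdeg (n₁ + n₂) → ℚ :=
  fun U => ∑ S₁ : PBTdeg n₁, ∑ S₂ : PBTdeg n₂,
    f S₁ * g S₂ *
      (if PBT.tamari (PBT.graftL S₁.1 S₂.1) U.1 ∧ PBT.tamari U.1 (PBT.graftR S₁.1 S₂.1)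
        then 1 else 0)

open Classical in
/-- Bilinear extension of the left grafting `/`. -/
noncomputable def gprodL {n₁ n₂ : ℕ} [Fintype (PBTdeg n₁)] [Fintype (PBTdeg n₂)]
    (f : PBTdeg n₁ → ℚ) (g : PBTdeg n₂ → ℚ) : PBTdeg (n₁ + n₂) → ℚ :=
  fun U => ∑ S₁ : PBTdeg n₁, ∑ S₂ : PBTdeg n₂,
    f S₁ * g S₂ * (if U.1 = PBT.graftL S₁.1 S₂.1 then 1 else 0)
/-!
Write `θ = -L N⁻¹` with `N = Lᵀ`, and let `\` also denote the bilinear extension of right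
grafting. Since `N δ_U` is the indicator of the upper set of `U`, and the upper set of `S\T` is
`{S'\T' : S ≤ S', T ≤ T'}` with `(S', T')` unique, `N(f\g) = (Nf)\(Ng)`; hence also
`N⁻¹(f\g) = (N⁻¹f)\(N⁻¹g)`. Dually `L δ_U` is the indicator of the lower set of `U`, and the
lower set of `S\T` is the disjoint union of the intervals `[S'/T', S'\T']` over `S' ≤ S`,
`T' ≤ T` (the pair is recovered from any element of its interval by cutting the tree along the
path to the appropriate leaf), so `L(f\g) = (Lf) * (Lg)`. Therefore
`θ(T¹\T²) = -L((N⁻¹T¹)\(N⁻¹T²)) = -(L N⁻¹T¹) * (L N⁻¹T²) = -θ(T¹) * θ(T²)`.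
-/

namespace PBT

theorem deg_graftL (S T : PBT) : (graftL S T).deg = S.deg + T.deg := by
  induction T with
  | leaf => rfl
  | node l r ihl _ => simp only [graftL, deg, ihl]; omega

theorem deg_graftR (S T : PBT) : (graftR S T).deg = S.deg + T.deg := by
  induction S with
  | leaf => simp [graftR, deg]
  | node l r _ ihr => simp only [graftR, deg, ihr]; omega

theorem rot.deg_eq {S T : PBT} (h : rot S T) : S.deg = T.deg := by
  induction h with
  | rotate => simp only [deg]; omega
  | left _ _ ih | right _ _ ih => simp only [deg, ih]

theorem rot.tamari {S T : PBT} (h : rot S T) : tamari S T :=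
  Relation.ReflTransGen.single h

theorem tamari.refl (S : PBT) : tamari S S := Relation.ReflTransGen.refl

theorem tamari.trans {S T U : PBT} (h : tamari S T) (h' : tamari T U) : tamari S U :=
  Relation.ReflTransGen.trans h h'

theorem tamari.deg_eq {S T : PBT} (h : tamari S T) : S.deg = T.deg := by
  induction h with
  | refl => rfl
  | tail _ h ih => exact ih.trans h.deg_eq

theorem tamari.node_left {l l' : PBT} (r : PBT) (h : tamari l l') :
    tamari (node l r) (node l' r) :=
  Relation.ReflTransGen.lift (node · r) (fun _ _ => rot.left r) _ _ h

theorem tamari.node_right (l : PBT) {r r' : PBT} (h : tamari r r') :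
    tamari (node l r) (node l r') :=
  Relation.ReflTransGen.lift (node l) (fun _ _ => rot.right l) _ _ h

theorem rot.graftR_left {S S' : PBT} (T : PBT) (h : rot S S') :
    rot (graftR S T) (graftR S' T) := by
  induction h with
  | rotate A B C => exact rot.rotate A B (graftR C T)
  | left _ h _ => exact rot.left _ h
  | right S _ ih => exact rot.right S ih

theorem tamari.graftR_right (S : PBT) {T T' : PBT} (h : tamari T T') :
    tamari (graftR S T) (graftR S T') := by
  induction S with
  | leaf => exact h
  | node l _ _ ihr => exact ihr.node_right l

theorem tamari.graftR_mono {S S' T T' : PBT} (hS : tamari S S') (hT : tamari T T') :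
    tamari (graftR S T) (graftR S' T') :=
  (Relation.ReflTransGen.lift (graftR · T) (fun _ _ => rot.graftR_left T) _ _ hS).trans
    (tamari.graftR_right S' hT)

def rightSizeSum : PBT → ℕ
  | leaf => 0
  | node l r => rightSizeSum l + rightSizeSum r + deg r

theorem rot.rightSizeSum_lt {S T : PBT} (h : rot S T) : rightSizeSum S < rightSizeSum T := by
  induction h with
  | rotate => simp only [rightSizeSum, deg]; omega
  | left _ _ ih => simp only [rightSizeSum]; omega
  | right _ h ih => simp only [rightSizeSum, h.deg_eq]; omega

theorem tamari.eq_or_rightSizeSum_lt {S T : PBT} (h : tamari S T) :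
    S = T ∨ rightSizeSum S < rightSizeSum T := by
  induction h with
  | refl => exact Or.inl rfl
  | tail _ h ih =>
    rcases ih with rfl | ih
    · exact Or.inr h.rightSizeSum_lt
    · exact Or.inr (ih.trans h.rightSizeSum_lt)

theorem tamari.rightSizeSum_le {S T : PBT} (h : tamari S T) : rightSizeSum S ≤ rightSizeSum T := by
  rcases h.eq_or_rightSizeSum_lt with rfl | h
  exacts [le_rfl, h.le]

theorem tamari.antisymm {S T : PBT} (h : tamari S T) (h' : tamari T S) : S = T :=
  h.eq_or_rightSizeSum_lt.resolve_right fun hlt => absurd h'.rightSizeSum_le (not_le.2 hlt)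

/-- Cut a tree along the path from the root to its `k`-th leaf (leaves numbered from `0`);
this inverts both `graftL` and `graftR` when `k` is the degree of the first factor. -/
def splitAt : ℕ → PBT → PBT × PBT
  | _, leaf => (leaf, leaf)
  | k, node l r =>
    if k ≤ deg l then ((splitAt k l).1, node (splitAt k l).2 r)
    else (node l (splitAt (k - deg l - 1) r).1, (splitAt (k - deg l - 1) r).2)

theorem splitAt_zero (U : PBT) : splitAt 0 U = (leaf, U) := by
  induction U with
  | leaf => rfl
  | node l r ihl _ => simp [splitAt, ihl]

theorem splitAt_deg_node (l r U : PBT) : splitAt (node l r).deg (node l U) =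
    (node l (splitAt r.deg U).1, (splitAt r.deg U).2) := by
  have h : (node l r).deg - l.deg - 1 = r.deg := by simp only [deg]; omega
  have h' : ¬ (node l r).deg ≤ l.deg := by simp only [deg]; omega
  simp only [splitAt, if_neg h', h]

theorem splitAt_deg_self (U : PBT) : splitAt U.deg U = (U, leaf) := by
  induction U with
  | leaf => rfl
  | node l r _ ihr => rw [splitAt_deg_node, ihr]

theorem splitAt_graftL (S T : PBT) : splitAt S.deg (graftL S T) = (S, T) := by
  induction T with
  | leaf => exact splitAt_deg_self S
  | node l r ihl _ =>
    have h : S.deg ≤ (graftL S l).deg := by rw [deg_graftL]; omega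
    simp [graftL, splitAt, h, ihl]

theorem splitAt_graftR (S T : PBT) : splitAt S.deg (graftR S T) = (S, T) := by
  induction S with
  | leaf => exact splitAt_zero T
  | node l r _ ihr => rw [graftR, splitAt_deg_node, ihr]

theorem tamari_node_graftR (S T r : PBT) : tamari (node (graftR S T) r) (graftR S (node T r)) := by
  induction S with
  | leaf => exact tamari.refl _
  | node p q _ ihr => exact (rot.rotate p (graftR q T) r).tamari.trans (ihr.node_right p)

theorem tamari_graftL_node (l S T : PBT) : tamari (graftL (node l S) T) (node l (graftL S T)) := by
  induction T with
  | leaf => exact tamari.refl _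
  | node p q ihl _ => exact (ihl.node_left q).trans (rot.rotate l (graftL S p) q).tamari

theorem splitAt_mem_interval (k : ℕ) (U : PBT) :
    tamari (graftL (splitAt k U).1 (splitAt k U).2) U ∧
      tamari U (graftR (splitAt k U).1 (splitAt k U).2) := by
  induction U generalizing k with
  | leaf => exact ⟨tamari.refl _, tamari.refl _⟩
  | node l r ihl ihr =>
    by_cases h : k ≤ deg l
    · obtain ⟨h1, h2⟩ := ihl k
      simp only [splitAt, if_pos h]
      exact ⟨h1.node_left r, (h2.node_left r).trans (tamari_node_graftR _ _ r)⟩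
    · obtain ⟨h1, h2⟩ := ihr (k - deg l - 1)
      simp only [splitAt, if_neg h]
      exact ⟨(tamari_graftL_node l _ _).trans (h1.node_right l), h2.node_right l⟩

theorem splitAt_mono_of_rot {U V : PBT} (h : rot U V) (k : ℕ) :
    tamari (splitAt k U).1 (splitAt k V).1 ∧ tamari (splitAt k U).2 (splitAt k V).2 := by
  induction h generalizing k with
  | rotate A B C =>
    by_cases hA : k ≤ deg A
    · have hAB : k ≤ deg (node A B) := by simp only [deg]; omega
      simp only [splitAt, if_pos hA, if_pos hAB]
      exact ⟨tamari.refl _, (rot.rotate _ B C).tamari⟩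
    by_cases hAB : k ≤ deg (node A B)
    · have hB : k - deg A - 1 ≤ deg B := by simp only [deg] at hAB; omega
      simp only [splitAt, if_pos hAB, if_neg hA, if_pos hB]
      exact ⟨tamari.refl _, tamari.refl _⟩
    · have hB : ¬ k - deg A - 1 ≤ deg B := by simp only [deg] at hAB; omega
      have hk : k - deg (node A B) - 1 = k - deg A - 1 - deg B - 1 := by simp only [deg]; omega
      simp only [splitAt, if_neg hAB, if_neg hA, if_neg hB, hk]
      exact ⟨(rot.rotate A B _).tamari, tamari.refl _⟩
  | @left S S' T h ih =>
    by_cases hS : k ≤ deg S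
    · simp only [splitAt, if_pos hS, if_pos (h.deg_eq ▸ hS)]
      exact ⟨(ih k).1, (ih k).2.node_left T⟩
    · simp only [splitAt, if_neg (h.deg_eq ▸ hS), h.deg_eq]
      exact ⟨h.tamari.node_left _, tamari.refl _⟩
  | @right S T T' h ih =>
    by_cases hS : k ≤ deg S
    · simp only [splitAt, if_pos hS]
      exact ⟨tamari.refl _, h.tamari.node_right _⟩
    · simp only [splitAt, if_neg hS]
      exact ⟨(ih _).1.node_right S, (ih _).2⟩

theorem splitAt_mono {U V : PBT} (h : tamari U V) (k : ℕ) :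
    tamari (splitAt k U).1 (splitAt k V).1 ∧ tamari (splitAt k U).2 (splitAt k V).2 := by
  induction h with
  | refl => exact ⟨tamari.refl _, tamari.refl _⟩
  | tail _ h ih =>
    obtain ⟨h1, h2⟩ := splitAt_mono_of_rot h k
    exact ⟨ih.1.trans h1, ih.2.trans h2⟩

theorem splitAt_eq_of_mem_interval {S T U : PBT}
    (hl : tamari (graftL S T) U) (hr : tamari U (graftR S T)) : splitAt S.deg U = (S, T) := by
  have hl' := splitAt_mono hl S.deg
  have hr' := splitAt_mono hr S.deg
  rw [splitAt_graftL] at hl'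
  rw [splitAt_graftR] at hr'
  exact Prod.ext (hr'.1.antisymm hl'.1) (hr'.2.antisymm hl'.2)

theorem tamari_graftR_iff {U S T : PBT} :
    tamari U (graftR S T) ↔ ∃ S' T', tamari S' S ∧ tamari T' T ∧
      tamari (graftL S' T') U ∧ tamari U (graftR S' T') := by
  constructor
  · intro h
    have hST := splitAt_mono h S.deg
    rw [splitAt_graftR] at hST
    exact ⟨_, _, hST.1, hST.2, splitAt_mem_interval S.deg U⟩
  · rintro ⟨S', T', hS, hT, -, hU⟩
    exact hU.trans (hS.graftR_mono hT)

theorem eq_of_mem_interval {S T S' T' U : PBT} (hdeg : S.deg = S'.deg)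
    (h : tamari (graftL S T) U ∧ tamari U (graftR S T))
    (h' : tamari (graftL S' T') U ∧ tamari U (graftR S' T')) : S = S' ∧ T = T' := by
  have e := splitAt_eq_of_mem_interval h.1 h.2
  rw [hdeg, splitAt_eq_of_mem_interval h'.1 h'.2] at e
  exact Prod.ext_iff.1 e.symm

theorem exists_eq_graftR_of_rot_graftR {S T U : PBT} (h : rot (graftR S T) U) :
    ∃ S' T', tamari S S' ∧ tamari T T' ∧ U = graftR S' T' := by
  induction S generalizing U with
  | leaf => exact ⟨leaf, U, tamari.refl _, h.tamari, rfl⟩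
  | node l r _ ihr =>
    cases h with
    | rotate A B C => exact ⟨node A (node B r), T, (rot.rotate A B r).tamari, tamari.refl _, rfl⟩
    | left _ h => exact ⟨_, T, (h.tamari).node_left r, tamari.refl _, rfl⟩
    | right _ h =>
      obtain ⟨S', T', hS, hT, rfl⟩ := ihr h
      exact ⟨node l S', T', hS.node_right l, hT, rfl⟩

theorem graftR_tamari_iff {U S T : PBT} :
    tamari (graftR S T) U ↔ ∃ S' T', tamari S S' ∧ tamari T T' ∧ U = graftR S' T' := by
  constructor
  · intro h
    induction h with
    | refl => exact ⟨S, T, tamari.refl _, tamari.refl _, rfl⟩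
    | tail _ h ih =>
      obtain ⟨S', T', hS, hT, rfl⟩ := ih
      obtain ⟨S'', T'', hS', hT', rfl⟩ := exists_eq_graftR_of_rot_graftR h
      exact ⟨S'', T'', hS.trans hS', hT.trans hT', rfl⟩
  · rintro ⟨S', T', hS, hT, rfl⟩
    exact hS.graftR_mono hT

theorem graftR_inj_of_deg_eq {S T S' T' : PBT} (hdeg : S.deg = S'.deg)
    (h : graftR S T = graftR S' T') : S = S' ∧ T = T' := by
  have e := splitAt_graftR S T
  rw [h, hdeg, splitAt_graftR] at e
  exact Prod.ext_iff.1 e.symm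

end PBT

section BilinExt

open Matrix

variable {α β γ R : Type*} [Fintype α] [Fintype β] [CommSemiring R]

def bilinExt (K : α → β → γ → R) (f : α → R) (g : β → R) : γ → R :=
  fun c => ∑ a, ∑ b, f a * g b * K a b c

theorem bilinExt_single [DecidableEq α] [DecidableEq β] (K : α → β → γ → R) (a : α) (b : β) :
    bilinExt K (Pi.single a 1) (Pi.single b 1) = K a b := by
  funext c
  simp [bilinExt, Pi.single_apply]

theorem mulVec_bilinExt [Fintype γ] (M : Matrix γ γ R) (K : α → β → γ → R)
    (f : α → R) (g : β → R) : M *ᵥ bilinExt K f g = bilinExt (fun a b => M *ᵥ K a b) f g := by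
  funext c
  simp only [bilinExt, mulVec, dotProduct, Finset.mul_sum]
  rw [Finset.sum_comm]
  refine Finset.sum_congr rfl fun a _ => ?_
  rw [Finset.sum_comm]
  exact Finset.sum_congr rfl fun b _ => Finset.sum_congr rfl fun _ _ => by ring

theorem bilinExt_mulVec (A : Matrix α α R) (B : Matrix β β R) (K : α → β → γ → R)
    (f : α → R) (g : β → R) :
    bilinExt K (A *ᵥ f) (B *ᵥ g) =
      bilinExt (fun a' b' c => ∑ a, ∑ b, A a a' * B b b' * K a b c) f g := by
  funext c
  simp only [bilinExt, mulVec, dotProduct, Finset.sum_mul, Finset.mul_sum]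
  conv_lhs => enter [2, a, 2, b]; rw [Finset.sum_comm]
  conv_lhs => enter [2, a]; rw [Finset.sum_comm]
  conv_rhs => enter [2, a']; rw [Finset.sum_comm]
  conv_rhs => enter [2, a', 2, a]; rw [Finset.sum_comm]
  rw [Finset.sum_comm]
  refine Finset.sum_congr rfl fun _ _ => Finset.sum_congr rfl fun _ _ =>
    Finset.sum_congr rfl fun _ _ => Finset.sum_congr rfl fun _ _ => by ring

end BilinExt

theorem bilinExt_neg_neg {α β γ R : Type*} [Fintype α] [Fintype β] [CommRing R]
    (K : α → β → γ → R) (f : α → R) (g : β → R) :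
    bilinExt K (-f) (-g) = bilinExt K f g := by
  funext c
  simp [bilinExt]


theorem Fintype.sum_sum_ite_eq_ite_exists {α β R : Type*} [Fintype α] [Fintype β]
    [AddCommMonoidWithOne R] (P : α → β → Prop) [∀ a b, Decidable (P a b)]
    [Decidable (∃ a b, P a b)] (huniq : ∀ a b a' b', P a b → P a' b' → a = a' ∧ b = b') :
    ∑ a, ∑ b, (if P a b then (1 : R) else 0) = if ∃ a b, P a b then 1 else 0 := by
  split_ifs with h
  · obtain ⟨a, b, hab⟩ := h
    rw [Finset.sum_eq_single a, Finset.sum_eq_single b, if_pos hab]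
    · exact fun b' _ hb => if_neg fun h' => hb (huniq _ _ _ _ h' hab).2
    · simp
    · exact fun a' _ ha => Finset.sum_eq_zero fun b' _ =>
        if_neg fun h' => ha (huniq _ _ _ _ h' hab).1
    · simp
  · exact Finset.sum_eq_zero fun a _ => Finset.sum_eq_zero fun b _ => if_neg fun h' => h ⟨a, b, h'⟩

open PBT Matrix

noncomputable def gprodR {n₁ n₂ : ℕ} [Fintype (PBTdeg n₁)] [Fintype (PBTdeg n₂)]
    (f : PBTdeg n₁ → ℚ) (g : PBTdeg n₂ → ℚ) : PBTdeg (n₁ + n₂) → ℚ :=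
  bilinExt (fun S₁ S₂ => delta (n₁ + n₂) (graftR S₁.1 S₂.1)) f g

theorem delta_eq_single {n : ℕ} {T : PBT} (hT : T.deg = n) : delta n T = Pi.single ⟨T, hT⟩ 1 := by
  funext U
  simp [delta, Pi.single_apply, Subtype.ext_iff]

theorem mulVec_delta {n : ℕ} [Fintype (PBTdeg n)] (M : Matrix (PBTdeg n) (PBTdeg n) ℚ) {T : PBT}
    (hT : T.deg = n) : M *ᵥ delta n T = fun U => M U ⟨T, hT⟩ := by
  rw [delta_eq_single hT, mulVec_single_one]
  rfl

section Products

variable {n₁ n₂ : ℕ} [Fintype (PBTdeg n₁)] [Fintype (PBTdeg n₂)]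

theorem gprodR_delta {S T : PBT} (hS : S.deg = n₁) (hT : T.deg = n₂) :
    gprodR (delta n₁ S) (delta n₂ T) = delta (n₁ + n₂) (graftR S T) := by
  rw [delta_eq_single hS, delta_eq_single hT, gprodR, bilinExt_single]

open Classical in
theorem Lmat_apply (n : ℕ) [Fintype (PBTdeg n)] (S T : PBTdeg n) :
    Lmat n S T = if tamari S.1 T.1 then 1 else 0 :=
  rfl

open Classical in
theorem dprod_eq_bilinExt (f : PBTdeg n₁ → ℚ) (g : PBTdeg n₂ → ℚ) :
    dprod f g = bilinExt (fun S₁ S₂ U =>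
      if tamari (graftL S₁.1 S₂.1) U.1 ∧ tamari U.1 (graftR S₁.1 S₂.1) then 1 else 0) f g :=
  rfl

theorem dprod_neg_neg (f : PBTdeg n₁ → ℚ) (g : PBTdeg n₂ → ℚ) : dprod (-f) (-g) = dprod f g := by
  simp only [dprod_eq_bilinExt, bilinExt_neg_neg]

variable [Fintype (PBTdeg (n₁ + n₂))]

theorem Lmat_transpose_mulVec_gprodR (f : PBTdeg n₁ → ℚ) (g : PBTdeg n₂ → ℚ) :
    (Lmat (n₁ + n₂))ᵀ *ᵥ gprodR f g = gprodR ((Lmat n₁)ᵀ *ᵥ f) ((Lmat n₂)ᵀ *ᵥ g) := by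
  classical
  rw [gprodR, gprodR, mulVec_bilinExt, bilinExt_mulVec]
  congr 1
  funext S T U
  rw [mulVec_delta _ (by rw [deg_graftR, S.2, T.2])]
  simp only [transpose_apply, Lmat_apply, delta, ite_zero_mul_ite_zero, mul_one]
  rw [Fintype.sum_sum_ite_eq_ite_exists _ fun S' T' S'' T'' h h' =>
    (graftR_inj_of_deg_eq (by rw [S'.2, S''.2]) (h.2.symm.trans h'.2)).imp Subtype.ext Subtype.ext]
  refine if_congr ?_ rfl rfl
  rw [graftR_tamari_iff]
  constructor
  · rintro ⟨S', T', hS, hT, hU⟩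
    exact ⟨⟨S', hS.deg_eq ▸ S.2⟩, ⟨T', hT.deg_eq ▸ T.2⟩, ⟨hS, hT⟩, hU⟩
  · rintro ⟨S', T', ⟨hS, hT⟩, hU⟩
    exact ⟨S'.1, T'.1, hS, hT, hU⟩

theorem Lmat_mulVec_gprodR (f : PBTdeg n₁ → ℚ) (g : PBTdeg n₂ → ℚ) :
    Lmat (n₁ + n₂) *ᵥ gprodR f g = dprod (Lmat n₁ *ᵥ f) (Lmat n₂ *ᵥ g) := by
  classical
  rw [gprodR, mulVec_bilinExt, dprod_eq_bilinExt, bilinExt_mulVec]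
  congr 1
  funext S T U
  rw [mulVec_delta _ (by rw [deg_graftR, S.2, T.2])]
  simp only [Lmat_apply, ite_zero_mul_ite_zero, mul_one]
  rw [Fintype.sum_sum_ite_eq_ite_exists _ fun S' T' S'' T'' h h' =>
    (eq_of_mem_interval (by rw [S'.2, S''.2]) h.2 h'.2).imp Subtype.ext Subtype.ext]
  refine if_congr ?_ rfl rfl
  rw [tamari_graftR_iff]
  constructor
  · rintro ⟨S', T', hS, hT, hU⟩
    exact ⟨⟨S', hS.deg_eq.trans S.2⟩, ⟨T', hT.deg_eq.trans T.2⟩, ⟨hS, hT⟩, hU⟩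
  · rintro ⟨S', T', ⟨hS, hT⟩, hU⟩
    exact ⟨S'.1, T'.1, hS, hT, hU⟩

end Products

section Inverse

theorem Lmat_blockTriangular (n : ℕ) [Fintype (PBTdeg n)] :
    (Lmat n).BlockTriangular fun S => rightSizeSum S.1 := by
  intro S T hlt
  classical
  rw [Lmat_apply, if_neg fun h => absurd h.rightSizeSum_le (not_le.2 hlt)]

theorem Lmat_det (n : ℕ) [Fintype (PBTdeg n)] : (Lmat n).det = 1 := by
  classical
  rw [(Lmat_blockTriangular n).det]
  refine Finset.prod_eq_one fun k _ => ?_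
  have hblock : (Lmat n).toSquareBlock (fun S => rightSizeSum S.1) k = 1 := by
    ext S T
    rw [toSquareBlock_def, of_apply, Lmat_apply, one_apply]
    refine if_congr ⟨fun h => ?_, fun h => h ▸ tamari.refl _⟩ rfl rfl
    rcases h.eq_or_rightSizeSum_lt with h | h
    · exact Subtype.ext (Subtype.ext h)
    · exact absurd h (by rw [S.2, T.2]; exact lt_irrefl k)
  rw [hblock, det_one]

theorem isUnit_det_Lmat_transpose (n : ℕ) [Fintype (PBTdeg n)] : IsUnit (Lmat n)ᵀ.det := by
  rw [det_transpose, Lmat_det]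
  exact isUnit_one

theorem Lmat_transpose_mulVec_inv (n : ℕ) [Fintype (PBTdeg n)] (f : PBTdeg n → ℚ) :
    (Lmat n)ᵀ *ᵥ ((Lmat n)ᵀ⁻¹ *ᵥ f) = f := by
  rw [mulVec_mulVec, mul_nonsing_inv _ (isUnit_det_Lmat_transpose n), one_mulVec]

theorem inv_transpose_mulVec_gprodR {n₁ n₂ : ℕ} [Fintype (PBTdeg n₁)] [Fintype (PBTdeg n₂)]
    [Fintype (PBTdeg (n₁ + n₂))] (f : PBTdeg n₁ → ℚ) (g : PBTdeg n₂ → ℚ) :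
    (Lmat (n₁ + n₂))ᵀ⁻¹ *ᵥ gprodR f g = gprodR ((Lmat n₁)ᵀ⁻¹ *ᵥ f) ((Lmat n₂)ᵀ⁻¹ *ᵥ g) := by
  have := invertibleOfIsUnitDet _ (isUnit_det_Lmat_transpose (n₁ + n₂))
  refine inv_mulVec_eq_vec ?_
  rw [Lmat_transpose_mulVec_gprodR, Lmat_transpose_mulVec_inv, Lmat_transpose_mulVec_inv]

end Inverse

theorem thetaMat_mulVec (n : ℕ) [Fintype (PBTdeg n)] (f : PBTdeg n → ℚ) :
    thetaMat n *ᵥ f = -(Lmat n *ᵥ ((Lmat n)ᵀ⁻¹ *ᵥ f)) := by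
  rw [thetaMat, neg_mulVec, mulVec_mulVec]

open PBT in
/-- `θ(T¹\T²) = -θ(T¹) * θ(T²)`, where `θ` is the Coxeter
transformation of the Tamari posets and `*` the (bilinearly extended)
dendriform product. -/
theorem theta_graftR (n₁ n₂ : ℕ) [Fintype (PBTdeg n₁)] [Fintype (PBTdeg n₂)]
    [Fintype (PBTdeg (n₁ + n₂))] (T₁ T₂ : PBT) (h₁ : T₁.deg = n₁) (h₂ : T₂.deg = n₂) :
    (thetaMat (n₁ + n₂)).mulVec (delta (n₁ + n₂) (graftR T₁ T₂)) =
      -dprod ((thetaMat n₁).mulVec (delta n₁ T₁)) ((thetaMat n₂).mulVec (delta n₂ T₂)) := by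
  rw [thetaMat_mulVec, thetaMat_mulVec, thetaMat_mulVec, dprod_neg_neg, ← gprodR_delta h₁ h₂,
    inv_transpose_mulVec_gprodR, Lmat_mulVec_gprodR]
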